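/- arXiv:1605.06220 — 3 statements merged into one kernel-verified Lean document; each statement's English description precedes it below -/
import Mathlib

section
/- Let (M_t) be a super-martingale adapted to a filtration with M_0 = 0 and differences bounded by |M_{t+1} − M_t| ≤ H η_t for constants H > 0 and a positive sequence (η_t) satisfying Σ η_t² < ∞ and (Σ_{s=0}^{t-1} η_s)/√(log t) → ∞. Then almost surely, limsup_{t→∞} M_t/(Σ_{s=0}^{t-1} η_s) ≤ 0. -/
/-!
Doob's decomposition writes `M = N + A` with `N` a martingale and `A` predictable; `A` starts
at `0` and is nonincreasing because `M` is a supermartingale, so `M ≤ N`. The increments of `N`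
are bounded by `2 H η_t` and orthogonal in `L²`, so `E[N_t²] ≤ 4 H² ∑ η_s²` stays bounded and `N`
converges almost surely. Dividing by `∑_{s<t} η_s`, which tends to infinity, sends `N_t` to `0`;
the trivial bound `|M_t| ≤ H ∑_{s<t} η_s` keeps the quotient bounded below, so the `limsup` is at
most `0`.
-/

open Filter Finset MeasureTheory Topology

namespace MeasureTheory

variable {Ω : Type*} {mΩ : MeasurableSpace Ω} {μ : Measure Ω} {𝒢 : Filtration ℕ mΩ}

section BoundedIncrements

variable {E : Type*} [NormedAddCommGroup E] [NormedSpace ℝ E] [CompleteSpace E]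
  {f : ℕ → Ω → E} {R : ℕ → ℝ}

theorem predictablePart_norm_sub_le (hbdd : ∀ i, ∀ᵐ ω ∂μ, ‖f (i + 1) ω - f i ω‖ ≤ R i) (i : ℕ) :
    ∀ᵐ ω ∂μ, ‖predictablePart f 𝒢 μ (i + 1) ω - predictablePart f 𝒢 μ i ω‖ ≤ R i := by
  simp_rw [predictablePart, Finset.sum_apply, Finset.sum_range_succ_sub_sum]
  exact ae_bdd_norm_condExp_of_ae_bdd_norm (hbdd i)

theorem martingalePart_norm_sub_le (hbdd : ∀ i, ∀ᵐ ω ∂μ, ‖f (i + 1) ω - f i ω‖ ≤ R i) (i : ℕ) :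
    ∀ᵐ ω ∂μ, ‖martingalePart f 𝒢 μ (i + 1) ω - martingalePart f 𝒢 μ i ω‖ ≤ 2 * R i := by
  filter_upwards [hbdd i, predictablePart_norm_sub_le (𝒢 := 𝒢) hbdd i] with ω hf hp
  simpa [two_mul, martingalePart, sub_sub_sub_comm] using
    (norm_sub_le _ _).trans (add_le_add hf hp)

end BoundedIncrements

theorem Supermartingale.le_martingalePart {M : ℕ → Ω → ℝ} (hM : Supermartingale M 𝒢 μ) :
    ∀ᵐ ω ∂μ, ∀ n, M n ω ≤ martingalePart M 𝒢 μ n ω := by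
  have hneg : ∀ n, predictablePart (-M) 𝒢 μ n =ᵐ[μ] -predictablePart M 𝒢 μ n := fun n => by
    simpa [neg_one_smul] using predictablePart_smul (ℱ := 𝒢) (μ := μ) (f := M) (-1) n
  filter_upwards [hM.neg.predictablePart_nonneg, ae_all_iff.2 hneg] with ω hnonneg hω n
  have hpred := hnonneg n
  rw [hω n] at hpred
  have hdecomp := congr_fun (congr_fun (martingalePart_add_predictablePart 𝒢 μ M) n) ω
  simp only [Pi.add_apply, Pi.neg_apply] at hdecomp hpred
  linarith

section SquareIntegrable

variable [IsFiniteMeasure μ] {N : ℕ → Ω → ℝ}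

theorem memLp_of_memLp_zero_of_abs_sub_le {p : ENNReal} {c : ℕ → ℝ}
    (hN : ∀ n, AEStronglyMeasurable (N n) μ) (h0 : MemLp (N 0) p μ)
    (hc : ∀ i, ∀ᵐ ω ∂μ, |N (i + 1) ω - N i ω| ≤ c i) (n : ℕ) : MemLp (N n) p μ := by
  induction n with
  | zero => exact h0
  | succ n ih =>
    have hd : MemLp (N (n + 1) - N n) p μ :=
      .of_bound ((hN _).sub (hN _)) (c n) (by simpa [Real.norm_eq_abs] using hc n)
    simpa using ih.add hd

theorem Martingale.integral_mul_sub_eq_zero (hN : Martingale N 𝒢 μ) {n : ℕ}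
    (hn : MemLp (N n) 2 μ) (hn' : MemLp (N (n + 1)) 2 μ) :
    ∫ ω, N n ω * (N (n + 1) ω - N n ω) ∂μ = 0 := by
  have hd : Integrable (N (n + 1) - N n) μ := (hN.integrable _).sub (hN.integrable _)
  have hcond : μ[N (n + 1) - N n | 𝒢 n] =ᵐ[μ] 0 := by
    filter_upwards [condExp_sub (hN.integrable (n + 1)) (hN.integrable n) (𝒢 n),
      hN.condExp_ae_eq n.le_succ] with ω h h1
    simp [h, h1, condExp_of_stronglyMeasurable (𝒢.le n) (hN.stronglyAdapted n) (hN.integrable n)]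
  calc ∫ ω, N n ω * (N (n + 1) ω - N n ω) ∂μ
      = ∫ ω, μ[N n * (N (n + 1) - N n) | 𝒢 n] ω ∂μ := (integral_condExp (𝒢.le n)).symm
    _ = ∫ ω, N n ω * μ[N (n + 1) - N n | 𝒢 n] ω ∂μ :=
        integral_congr_ae (condExp_mul_of_stronglyMeasurable_left (hN.stronglyAdapted n)
          (hn.integrable_mul (hn'.sub hn)) hd)
    _ = ∫ _ω, (0 : ℝ) ∂μ := integral_congr_ae (hcond.mono fun ω hω => by simp [hω])
    _ = 0 := integral_zero _ _

theorem Martingale.integral_sq_succ (hN : Martingale N 𝒢 μ) {n : ℕ}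
    (hn : MemLp (N n) 2 μ) (hn' : MemLp (N (n + 1)) 2 μ) :
    ∫ ω, N (n + 1) ω ^ 2 ∂μ = ∫ ω, N n ω ^ 2 ∂μ + ∫ ω, (N (n + 1) ω - N n ω) ^ 2 ∂μ := by
  have hcross : Integrable (fun ω => 2 * (N n ω * (N (n + 1) ω - N n ω))) μ :=
    (hn.integrable_mul (hn'.sub hn)).const_mul 2
  have hsq : Integrable (fun ω => (N (n + 1) ω - N n ω) ^ 2) μ := (hn'.sub hn).integrable_sq
  have hfirst : Integrable (fun ω => N n ω ^ 2 + 2 * (N n ω * (N (n + 1) ω - N n ω))) μ :=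
    hn.integrable_sq.add hcross
  calc ∫ ω, N (n + 1) ω ^ 2 ∂μ
      = ∫ ω, N n ω ^ 2 + 2 * (N n ω * (N (n + 1) ω - N n ω)) + (N (n + 1) ω - N n ω) ^ 2 ∂μ :=
        integral_congr_ae (ae_of_all _ fun ω => by ring)
    _ = ∫ ω, N n ω ^ 2 ∂μ + ∫ ω, (N (n + 1) ω - N n ω) ^ 2 ∂μ := by
        rw [integral_add hfirst hsq, integral_add hn.integrable_sq hcross,
          integral_const_mul, hN.integral_mul_sub_eq_zero hn hn', mul_zero, add_zero]

theorem Martingale.integral_sq_eq_sum (hN : Martingale N 𝒢 μ) (hL2 : ∀ n, MemLp (N n) 2 μ)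
    (n : ℕ) : ∫ ω, N n ω ^ 2 ∂μ =
      ∫ ω, N 0 ω ^ 2 ∂μ + ∑ i ∈ range n, ∫ ω, (N (i + 1) ω - N i ω) ^ 2 ∂μ := by
  induction n with
  | zero => simp
  | succ n ih => rw [hN.integral_sq_succ (hL2 n) (hL2 (n + 1)), ih, sum_range_succ, add_assoc]

theorem Martingale.exists_ae_tendsto_of_integral_sq_le
    (hN : Martingale N 𝒢 μ) (hL2 : ∀ n, MemLp (N n) 2 μ) {K : ℝ}
    (hK : ∀ n, ∫ ω, N n ω ^ 2 ∂μ ≤ K) :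
    ∀ᵐ ω ∂μ, ∃ c, Tendsto (N · ω) atTop (𝓝 c) := by
  refine hN.submartingale.exists_ae_tendsto_of_bdd (R := ((K + μ.real Set.univ) / 2).toNNReal)
    fun n => ?_
  -- `|x| ≤ (x ^ 2 + 1) / 2` turns the `L²` bound into an `L¹` bound.
  have habs : ∫ ω, |N n ω| ∂μ ≤ (K + μ.real Set.univ) / 2 := by
    calc ∫ ω, |N n ω| ∂μ ≤ ∫ ω, (N n ω ^ 2 + 1) / 2 ∂μ :=
          integral_mono (hN.integrable n).abs (((hL2 n).integrable_sq.add
            (integrable_const 1)).div_const 2)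
            fun ω => by nlinarith [sq_nonneg (|N n ω| - 1), sq_abs (N n ω)]
      _ = (∫ ω, N n ω ^ 2 ∂μ + μ.real Set.univ) / 2 := by
          rw [integral_div, integral_add (hL2 n).integrable_sq (integrable_const 1)]
          simp
      _ ≤ (K + μ.real Set.univ) / 2 := by linarith [hK n]
  rw [eLpNorm_one_eq_lintegral_enorm, ← ofReal_integral_norm_eq_lintegral_enorm (hN.integrable n)]
  exact ENNReal.ofReal_le_ofReal (by simpa [Real.norm_eq_abs] using habs)

theorem Martingale.exists_ae_tendsto_of_summable_sq
    (hN : Martingale N 𝒢 μ) (h0 : MemLp (N 0) 2 μ) {c : ℕ → ℝ}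
    (hc : ∀ i, ∀ᵐ ω ∂μ, |N (i + 1) ω - N i ω| ≤ c i) (hsum : Summable fun i => c i ^ 2) :
    ∀ᵐ ω ∂μ, ∃ l, Tendsto (N · ω) atTop (𝓝 l) := by
  have hL2 : ∀ n, MemLp (N n) 2 μ :=
    memLp_of_memLp_zero_of_abs_sub_le (fun n => (hN.integrable n).1) h0 hc
  have hinc : ∀ i, ∫ ω, (N (i + 1) ω - N i ω) ^ 2 ∂μ ≤ μ.real Set.univ * c i ^ 2 := fun i => by
    calc ∫ ω, (N (i + 1) ω - N i ω) ^ 2 ∂μ ≤ ∫ _ω, c i ^ 2 ∂μ :=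
          integral_mono_ae ((hL2 _).sub (hL2 _)).integrable_sq (integrable_const _)
            ((hc i).mono fun ω hω => sq_le_sq' (abs_le.1 hω).1 (abs_le.1 hω).2)
      _ = μ.real Set.univ * c i ^ 2 := by simp
  refine hN.exists_ae_tendsto_of_integral_sq_le hL2
    (K := ∫ ω, N 0 ω ^ 2 ∂μ + μ.real Set.univ * ∑' i, c i ^ 2) fun n => ?_
  rw [hN.integral_sq_eq_sum hL2, ← tsum_mul_left]
  gcongr
  exact ((sum_le_sum fun i _ => hinc i)).trans
    ((hsum.mul_left _).sum_le_tsum _ fun i _ => by positivity)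

end SquareIntegrable

end MeasureTheory

theorem Filter.Tendsto.atTop_of_div_atTop {α : Type*} {l : Filter α} {f g : α → ℝ}
    (hfg : Tendsto (fun x => f x / g x) l atTop) (hg : Tendsto g l atTop) :
    Tendsto f l atTop :=
  (hfg.atTop_mul_atTop₀ hg).congr' <| by
    filter_upwards [hg.eventually_gt_atTop 0] with x hx
    exact div_mul_cancel₀ _ hx.ne'

theorem limsup_div_nonpos {α : Type*} {l : Filter α} [l.NeBot] {x S : α → ℝ}
    (hx : IsBoundedUnder (· ≤ ·) l x) (hS : Tendsto S l atTop)
    (hbdd : IsBoundedUnder (· ≥ ·) l fun a => x a / S a) :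
    limsup (fun a => x a / S a) l ≤ 0 := by
  obtain ⟨C, hC⟩ := hx
  have hCS : Tendsto (fun a => C / S a) l (𝓝 0) := tendsto_const_nhds.div_atTop hS
  calc limsup (fun a => x a / S a) l ≤ limsup (fun a => C / S a) l :=
        limsup_le_limsup (by
          filter_upwards [hC, hS.eventually_gt_atTop 0] with a hxa hSa
          exact div_le_div_of_nonneg_right hxa hSa.le) hbdd.isCoboundedUnder_le
          hCS.isBoundedUnder_le
    _ = 0 := hCS.limsup_eq

theorem stmt2_general {Ω : Type*} {mΩ : MeasurableSpace Ω} {μ : Measure Ω} [IsProbabilityMeasure μ]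
    (𝒢 : Filtration ℕ mΩ) (M : ℕ → Ω → ℝ) (hM : Supermartingale M 𝒢 μ)
    (hM0 : ∀ ω, M 0 ω = 0)
    (H : ℝ) (η : ℕ → ℝ)
    (hdiff : ∀ t, ∀ ω, |M (t + 1) ω - M t ω| ≤ H * η t)
    (hsq : Summable fun t => (η t) ^ 2)
    (hlog : Tendsto (fun t : ℕ => (∑ s ∈ Finset.range t, η s) / Real.sqrt (Real.log t))
      atTop atTop) :
    ∀ᵐ ω ∂μ, Filter.limsup (fun t : ℕ => M t ω / ∑ s ∈ Finset.range t, η s) atTop ≤ 0 := by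
  have hS : Tendsto (fun t : ℕ => ∑ s ∈ range t, η s) atTop atTop := hlog.atTop_of_div_atTop <|
    Real.tendsto_sqrt_atTop.comp (Real.tendsto_log_atTop.comp tendsto_natCast_atTop_atTop)
  have hinc : ∀ t, ∀ᵐ ω ∂μ,
      |martingalePart M 𝒢 μ (t + 1) ω - martingalePart M 𝒢 μ t ω| ≤ 2 * (H * η t) :=
    martingalePart_norm_sub_le (f := M) (R := fun t => H * η t) fun t => ae_of_all μ (hdiff t)
  have hmart := martingale_martingalePart hM.stronglyAdapted hM.integrable
  have hN := hmart.exists_ae_tendsto_of_summable_sq (by simp [martingalePart_zero, funext hM0]) hinc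
    ((hsq.mul_left ((2 * H) ^ 2)).congr fun t => by ring)
  filter_upwards [hN, hM.le_martingalePart] with ω ⟨c, hc⟩ hle
  refine limsup_div_nonpos (hc.isBoundedUnder_le.mono_le (.of_forall hle)) hS ?_
  refine ⟨-H, eventually_map.2 ?_⟩
  filter_upwards [hS.eventually_gt_atTop 0] with t ht
  have hMt : |M t ω| ≤ H * ∑ s ∈ range t, η s := by
    simpa [Real.dist_eq, hM0, abs_sub_comm, mul_sum] using
      dist_le_range_sum_of_dist_le (f := (M · ω)) t fun _ =>
        (abs_sub_comm _ _).trans_le (hdiff _ ω)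
  rw [ge_iff_le, le_div_iff₀ ht]
  linarith [neg_abs_le (M t ω)]

/-- If `M` is a super-martingale with `M 0 = 0` and differences bounded by `H * η t`,
where `η` is positive, square-summable, and `(∑_{s<t} η s)/√(log t) → ∞`, then almost surely
`limsupₜ Mₜ / (∑_{s<t} η s) ≤ 0`. -/
theorem stmt2 {Ω : Type*} {mΩ : MeasurableSpace Ω} {μ : Measure Ω} [IsProbabilityMeasure μ]
    (𝒢 : Filtration ℕ mΩ) (M : ℕ → Ω → ℝ) (hM : Supermartingale M 𝒢 μ)
    (hM0 : ∀ ω, M 0 ω = 0)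
    (H : ℝ) (hH : 0 < H) (η : ℕ → ℝ) (hηpos : ∀ t, 0 < η t)
    (hdiff : ∀ t, ∀ ω, |M (t + 1) ω - M t ω| ≤ H * η t)
    (hsq : Summable fun t => (η t) ^ 2)
    (hlog : Tendsto (fun t : ℕ => (∑ s ∈ Finset.range t, η s) / Real.sqrt (Real.log t))
      atTop atTop) :
    ∀ᵐ ω ∂μ, Filter.limsup (fun t : ℕ => M t ω / ∑ s ∈ Finset.range t, η s) atTop ≤ 0 :=
  stmt2_general 𝒢 M hM hM0 H η hdiff hsq hlog
end

section
/- Let (θ_t) be a Markov chain in ℝ^d and h: ℝ^d → [0,∞) with E[h²(θ_{t+1})|θ_t] ≤ h²(θ_t) − 2η_t[a·h²(θ_t) − b·h(θ_t)]𝟙(θ_t ∉ ∂Θ_t) + Dη_t², where a > 0, b ≥ 0, D ≥ 0. Fix β > 1 and set B = {θ : h(θ) ≤ βb/a}. Then Σ_{s=0}^{t-1} Y_{s+1}𝟙(θ_s ∈ ∂Θ_s^c ∩ B^c) is a super-martingale, where Y_{t+1} = h²(θ_{t+1}) − h²(θ_t) + 2η_t β(β−1)b²/a − Dη_t². -/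
open MeasureTheory Finset
open scoped Classical

/-!
Outside `∂Θ_t ∪ B` we have `h(θ_t) > βb/a`, and there the drift term dominates:
`a x² − b x ≥ β(β−1)b²/a` for `x > βb/a`. Hence the drift inequality makes the conditional
expectation of every increment `Y_{t+1} 𝟙(θ_t ∈ ∂Θ_tᶜ ∩ Bᶜ)` nonpositive, and a process
whose increments have nonpositive conditional expectation is a super-martingale.
-/

section

variable {Ω : Type*} {mΩ : MeasurableSpace Ω} {μ : Measure Ω} [IsFiniteMeasure μ]

theorem condExp_indicator_sub_nonpos {m : MeasurableSpace Ω} (hm : m ≤ mΩ) {f g : Ω → ℝ}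
    {A : Set Ω} (hf : Integrable f μ) (hgm : StronglyMeasurable[m] g) (hgi : Integrable g μ)
    (hA : MeasurableSet[m] A) (hle : ∀ᵐ ω ∂μ, ω ∈ A → μ[f | m] ω ≤ g ω) :
    μ[A.indicator (f - g) | m] ≤ᵐ[μ] 0 := by
  filter_upwards [condExp_indicator (hf.sub hgi) hA, condExp_sub hf hgi m, hle]
    with ω hind hsub hω
  rw [hind, Pi.zero_apply]
  by_cases hωA : ω ∈ A
  · rw [Set.indicator_of_mem hωA, hsub, Pi.sub_apply,
      condExp_of_stronglyMeasurable hm hgm hgi, sub_nonpos]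
    exact hω hωA
  · rw [Set.indicator_of_notMem hωA]

variable {𝒢 : Filtration ℕ mΩ}

theorem supermartingale_sum_range_of_condExp_nonpos {ξ : ℕ → Ω → ℝ}
    (hξm : ∀ s, StronglyMeasurable[𝒢 (s + 1)] (ξ s)) (hξi : ∀ s, Integrable (ξ s) μ)
    (hξ : ∀ s, μ[ξ s | 𝒢 s] ≤ᵐ[μ] 0) :
    Supermartingale (fun t ω => ∑ s ∈ range t, ξ s ω) 𝒢 μ := by
  have hadp : StronglyAdapted 𝒢 (fun t ω => ∑ s ∈ range t, ξ s ω) := fun t =>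
    Finset.stronglyMeasurable_fun_sum _ fun s hs => (hξm s).mono (𝒢.mono (mem_range.1 hs))
  have hint : ∀ t, Integrable (fun ω => ∑ s ∈ range t, ξ s ω) μ := fun t =>
    integrable_finsetSum _ fun s _ => hξi s
  refine supermartingale_nat hadp hint fun t => ?_
  have hsucc : (fun ω => ∑ s ∈ range (t + 1), ξ s ω) =
      (fun ω => ∑ s ∈ range t, ξ s ω) + ξ t := by
    funext ω
    simp only [sum_range_succ, Pi.add_apply]
  simp only [hsucc]
  filter_upwards [condExp_add (hint t) (hξi t) (𝒢 t), hξ t] with ω hadd hω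
  rw [hadd, Pi.add_apply, condExp_of_stronglyMeasurable (𝒢.le t) (hadp t) (hint t)]
  exact add_le_of_nonpos_right hω

theorem supermartingale_sum_indicator_increment {X : ℕ → Ω → ℝ} {A : ℕ → Set Ω} {c : ℕ → ℝ}
    (hX : StronglyAdapted 𝒢 X) (hXi : ∀ s, Integrable (X s) μ)
    (hA : ∀ s, MeasurableSet[𝒢 s] (A s))
    (hdrift : ∀ s, ∀ᵐ ω ∂μ, ω ∈ A s → μ[X (s + 1) | 𝒢 s] ω ≤ X s ω - c s) :
    Supermartingale
      (fun t ω => ∑ s ∈ range t, (A s).indicator (fun ω => X (s + 1) ω - X s ω + c s) ω)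
      𝒢 μ := by
  refine supermartingale_sum_range_of_condExp_nonpos (fun s => ?_) (fun s => ?_) (fun s => ?_)
  · exact (((hX (s + 1)).sub ((hX s).mono (𝒢.mono s.le_succ))).add
      stronglyMeasurable_const).indicator (𝒢.mono s.le_succ _ (hA s))
  · exact (((hXi (s + 1)).sub (hXi s)).add (integrable_const _)).indicator (𝒢.le s _ (hA s))
  · have hsplit : (fun ω => X (s + 1) ω - X s ω + c s) = X (s + 1) - fun ω => X s ω - c s := by
      funext ω
      simp only [Pi.sub_apply]
      ring
    rw [hsplit]
    exact condExp_indicator_sub_nonpos (𝒢.le s) (hXi (s + 1))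
      ((hX s).sub stronglyMeasurable_const) ((hXi s).sub (integrable_const _)) (hA s) (hdrift s)

end

-- `a x² − b x − β(β−1)b²/a = (x − βb/a)(a x + (β−1) b)`
theorem le_mul_sq_sub_mul_of_div_lt {a b β x : ℝ} (ha : 0 < a) (hb : 0 ≤ b) (hβ : 1 ≤ β)
    (hx : β * b / a < x) : β * (β - 1) * b ^ 2 / a ≤ a * x ^ 2 - b * x := by
  rw [div_lt_iff₀ ha] at hx
  rw [div_le_iff₀ ha]
  nlinarith [mul_nonneg (sub_nonneg.2 hx.le) (by nlinarith : (0 : ℝ) ≤ x * a + (β - 1) * b)]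

theorem le_sq_sub_of_drift_of_div_lt {a b β η D x y : ℝ} (ha : 0 < a) (hb : 0 ≤ b) (hβ : 1 ≤ β)
    (hη : 0 ≤ η) (hx : β * b / a < x) (hy : y ≤ x ^ 2 - 2 * η * (a * x ^ 2 - b * x) + D * η ^ 2) :
    y ≤ x ^ 2 - (2 * η * β * (β - 1) * b ^ 2 / a - D * η ^ 2) := by
  have hgain := mul_le_mul_of_nonneg_left (le_mul_sq_sub_mul_of_div_lt ha hb hβ hx)
    (by linarith : 0 ≤ 2 * η)
  have hc : 2 * η * β * (β - 1) * b ^ 2 / a = 2 * η * (β * (β - 1) * b ^ 2 / a) := by ring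
  linarith

theorem stmt14_general {Ω : Type*} {mΩ : MeasurableSpace Ω} {μ : Measure Ω} [IsProbabilityMeasure μ]
    {d : ℕ} (𝒢 : Filtration ℕ mΩ) (θ : ℕ → Ω → EuclideanSpace ℝ (Fin d))
    (hadapted : Adapted 𝒢 θ)
    (h : EuclideanSpace ℝ (Fin d) → ℝ) (hh : Measurable h) (hhnonneg : ∀ z, 0 ≤ h z)
    (R : ℝ) (hhbd : ∀ z, h z ≤ R)
    (bdry : ℕ → Set (EuclideanSpace ℝ (Fin d))) (hbdry : ∀ t, MeasurableSet (bdry t))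
    (η : ℕ → ℝ) (hη : ∀ t, 0 < η t)
    (a b D β : ℝ) (ha : 0 < a) (hb : 0 ≤ b) (hβ : 1 < β)
    (hdrift : ∀ t, ∀ᵐ ω ∂μ,
      (μ[fun ω' => h (θ (t + 1) ω') ^ 2 | 𝒢 t]) ω ≤
        h (θ t ω) ^ 2 -
          2 * η t * (a * h (θ t ω) ^ 2 - b * h (θ t ω)) *
            (if θ t ω ∈ bdry t then 0 else 1) +
          D * η t ^ 2)
    (B : Set (EuclideanSpace ℝ (Fin d))) (hB : B = {z | h z ≤ β * b / a}) :
    Supermartingale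
      (fun t ω => ∑ s ∈ Finset.range t,
        if θ s ω ∉ bdry s ∧ θ s ω ∉ B then
          h (θ (s + 1) ω) ^ 2 - h (θ s ω) ^ 2 + 2 * η s * β * (β - 1) * b ^ 2 / a -
            D * η s ^ 2
        else 0)
      𝒢 μ := by
  have hBm : MeasurableSet B := hB ▸ measurableSet_le hh measurable_const
  have hX : StronglyAdapted 𝒢 fun s ω => h (θ s ω) ^ 2 := fun s =>
    ((hh.comp (hadapted s)).pow_const 2).stronglyMeasurable
  have hXi : ∀ s, Integrable (fun ω => h (θ s ω) ^ 2) μ := fun s =>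
    Integrable.of_bound ((hX s).mono (𝒢.le s)).aestronglyMeasurable (R ^ 2) (ae_of_all _ fun ω => by
      rw [Real.norm_of_nonneg (sq_nonneg _)]
      exact pow_le_pow_left₀ (hhnonneg _) (hhbd _) 2)
  have hA : ∀ s, MeasurableSet[𝒢 s] (θ s ⁻¹' ((bdry s)ᶜ ∩ Bᶜ)) := fun s =>
    hadapted s ((hbdry s).compl.inter hBm.compl)
  have hdrift' : ∀ s, ∀ᵐ ω ∂μ, ω ∈ θ s ⁻¹' ((bdry s)ᶜ ∩ Bᶜ) →
      μ[fun ω' => h (θ (s + 1) ω') ^ 2 | 𝒢 s] ω ≤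
        h (θ s ω) ^ 2 - (2 * η s * β * (β - 1) * b ^ 2 / a - D * η s ^ 2) := by
    intro s
    filter_upwards [hdrift s] with ω hω ⟨hnbdry, hnB⟩
    rw [if_neg hnbdry, mul_one] at hω
    have hx : β * b / a < h (θ s ω) := by
      subst hB
      exact not_le.1 hnB
    exact le_sq_sub_of_drift_of_div_lt ha hb hβ.le (hη s).le hx hω
  convert supermartingale_sum_indicator_increment hX hXi hA hdrift' using 4 with t ω s
  simp only [Set.indicator_apply, Set.mem_preimage, Set.mem_inter_iff, Set.mem_compl_iff]
  split_ifs <;> ring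

/-- Lemma 5.1, first super-martingale. If the Markov chain `θ` satisfies the drift inequality
`E[h²(θ_{t+1})|θ_t] ≤ h²(θ_t) − 2η_t[a h²(θ_t) − b h(θ_t)]𝟙(θ_t ∉ bdry_t) + D η_t²`, then with
`B = {θ : h θ ≤ β b / a}` and
`Y_{t+1} = h²(θ_{t+1}) − h²(θ_t) + 2η_t β(β−1)b²/a − Dη_t²`, the process
`∑_{s<t} Y_{s+1} 𝟙(θ_s ∈ bdry_s^c ∩ B^c)` is a super-martingale. -/
theorem stmt14 {Ω : Type*} {mΩ : MeasurableSpace Ω} {μ : Measure Ω} [IsProbabilityMeasure μ]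
    {d : ℕ} (𝒢 : Filtration ℕ mΩ) (θ : ℕ → Ω → EuclideanSpace ℝ (Fin d))
    (hadapted : Adapted 𝒢 θ) (hmeas : ∀ t, Measurable (θ t))
    (h : EuclideanSpace ℝ (Fin d) → ℝ) (hh : Measurable h) (hhnonneg : ∀ z, 0 ≤ h z)
    (R : ℝ) (hhbd : ∀ z, h z ≤ R)
    (bdry : ℕ → Set (EuclideanSpace ℝ (Fin d))) (hbdry : ∀ t, MeasurableSet (bdry t))
    (η : ℕ → ℝ) (hη : ∀ t, 0 < η t)
    (a b D β : ℝ) (ha : 0 < a) (hb : 0 ≤ b) (hD : 0 ≤ D) (hβ : 1 < β)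
    (hdrift : ∀ t, ∀ᵐ ω ∂μ,
      (μ[fun ω' => h (θ (t + 1) ω') ^ 2 | 𝒢 t]) ω ≤
        h (θ t ω) ^ 2 -
          2 * η t * (a * h (θ t ω) ^ 2 - b * h (θ t ω)) *
            (if θ t ω ∈ bdry t then 0 else 1) +
          D * η t ^ 2)
    (B : Set (EuclideanSpace ℝ (Fin d))) (hB : B = {z | h z ≤ β * b / a}) :
    Supermartingale
      (fun t ω => ∑ s ∈ Finset.range t,
        if θ s ω ∉ bdry s ∧ θ s ω ∉ B then
          h (θ (s + 1) ω) ^ 2 - h (θ s ω) ^ 2 + 2 * η s * β * (β - 1) * b ^ 2 / a -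
            D * η s ^ 2
        else 0)
      𝒢 μ :=
  stmt14_general 𝒢 θ hadapted h hh hhnonneg R hhbd bdry hbdry η hη a b D β ha hb hβ hdrift B hB
end

section
/- Under the same setting, Σ_{s=0}^{t-1} Z_{s+1}𝟙(θ_s ∈ ∂Θ_s ∪ B) is a super-martingale, where Z_{t+1} = h²(θ_{t+1}) − h²(θ_t) − η_t b²/(2a) − Dη_t², provided additionally that E[h²(θ_{t+1})|θ_t] = h²(θ_t) whenever θ_t ∈ ∂Θ_t. -/
/-!
Write `Z_t = h²(θ_{t+1}) − h²(θ_t) − η_t b²/(2a) − Dη_t²`. Since `b x − a x² ≤ b²/(4a)` for every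
real `x`, the drift inequality gives `E[Z_t | 𝒢_t] ≤ 0` off the boundary, and on the boundary
`E[Z_t | 𝒢_t] = −η_t b²/(2a) − Dη_t² ≤ 0`. Multiplying the increments by the indicator of a
𝒢_t-measurable set keeps their conditional expectations nonpositive, so the partial sums form a
super-martingale.
-/

open MeasureTheory Finset
open scoped Classical

theorem mul_sub_mul_sq_le_sq_div (a b x : ℝ) (ha : 0 < a) :
    b * x - a * x ^ 2 ≤ b ^ 2 / (4 * a) := by
  rw [le_div_iff₀ (by positivity)]
  nlinarith [sq_nonneg (2 * a * x - b)]

theorem le_sq_add_of_drift {p : Prop} [Decidable p] {c x η a b D : ℝ} (hη : 0 ≤ η) (ha : 0 < a)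
    (hD : 0 ≤ D)
    (hdrift : c ≤ x ^ 2 - 2 * η * (a * x ^ 2 - b * x) * (if p then 0 else 1) + D * η ^ 2)
    (hstay : p → c = x ^ 2) :
    c ≤ x ^ 2 + η * b ^ 2 / (2 * a) + D * η ^ 2 := by
  by_cases hp : p
  · have hηb : 0 ≤ η * b ^ 2 / (2 * a) := by positivity
    linarith [hstay hp, mul_nonneg hD (sq_nonneg η)]
  · rw [if_neg hp, mul_one] at hdrift
    have hmax : 2 * η * (b * x - a * x ^ 2) ≤ η * b ^ 2 / (2 * a) :=
      calc _ ≤ 2 * η * (b ^ 2 / (4 * a)) :=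
            mul_le_mul_of_nonneg_left (mul_sub_mul_sq_le_sq_div a b x ha) (by positivity)
        _ = η * b ^ 2 / (2 * a) := by field_simp; ring
    linarith

section

variable {Ω : Type*} {mΩ : MeasurableSpace Ω} {μ : Measure Ω} {𝒢 : Filtration ℕ mΩ}

theorem integrable_sq_comp [IsFiniteMeasure μ] {E : Type*} [MeasurableSpace E] {X : Ω → E}
    (hX : Measurable X) {h : E → ℝ} (hh : Measurable h) (h0 : ∀ z, 0 ≤ h z) {R : ℝ}
    (hR : ∀ z, h z ≤ R) : Integrable (fun ω => h (X ω) ^ 2) μ :=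
  Integrable.of_bound ((hh.comp hX).pow_const 2).aestronglyMeasurable (R ^ 2)
    (Filter.Eventually.of_forall fun ω => by
      rw [Real.norm_of_nonneg (sq_nonneg _)]
      exact pow_le_pow_left₀ (h0 _) (hR _) 2)

theorem condExp_sub_nonpos_of_le {m : MeasurableSpace Ω} (hm : m ≤ mΩ) [SigmaFinite (μ.trim hm)]
    {f g : Ω → ℝ} (hf : Integrable f μ) (hg : Integrable g μ) (hgm : StronglyMeasurable[m] g)
    (hfg : μ[f | m] ≤ᵐ[μ] g) : μ[f - g | m] ≤ᵐ[μ] 0 := by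
  filter_upwards [condExp_sub hf hg m, hfg] with ω hsub hle
  rw [hsub, Pi.sub_apply, condExp_of_stronglyMeasurable hm hgm hg]
  exact sub_nonpos.mpr hle

theorem supermartingale_sum_range [IsFiniteMeasure μ] {g : ℕ → Ω → ℝ}
    (hmeas : ∀ s, StronglyMeasurable[𝒢 (s + 1)] (g s)) (hint : ∀ s, Integrable (g s) μ)
    (hcond : ∀ s, μ[g s | 𝒢 s] ≤ᵐ[μ] 0) :
    Supermartingale (fun t ω => ∑ s ∈ range t, g s ω) 𝒢 μ := by
  have hadp : StronglyAdapted 𝒢 (fun t ω => ∑ s ∈ range t, g s ω) := fun t =>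
    Finset.stronglyMeasurable_fun_sum _ fun s hs => (hmeas s).mono (𝒢.mono (mem_range.mp hs))
  have hsum_int : ∀ t, Integrable (fun ω => ∑ s ∈ range t, g s ω) μ := fun t =>
    integrable_finsetSum _ fun s _ => hint s
  refine supermartingale_nat hadp hsum_int fun t => ?_
  have hsucc : (fun ω => ∑ s ∈ range (t + 1), g s ω) =
      (fun ω => ∑ s ∈ range t, g s ω) + g t := by
    funext ω
    simp only [sum_range_succ, Pi.add_apply]
  filter_upwards [condExp_add (hsum_int t) (hint t) (𝒢 t), hcond t] with ω hadd hneg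
  rw [hsucc, hadd, Pi.add_apply, condExp_of_stronglyMeasurable (𝒢.le t) (hadp t) (hsum_int t)]
  exact add_le_of_nonpos_right hneg

theorem supermartingale_sum_range_indicator [IsFiniteMeasure μ] {A : ℕ → Set Ω}
    (hA : ∀ s, MeasurableSet[𝒢 s] (A s)) {Z : ℕ → Ω → ℝ}
    (hmeas : ∀ s, StronglyMeasurable[𝒢 (s + 1)] (Z s)) (hint : ∀ s, Integrable (Z s) μ)
    (hcond : ∀ s, ∀ᵐ ω ∂μ, ω ∈ A s → μ[Z s | 𝒢 s] ω ≤ 0) :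
    Supermartingale (fun t ω => ∑ s ∈ range t, (A s).indicator (Z s) ω) 𝒢 μ := by
  refine supermartingale_sum_range (fun s => (hmeas s).indicator (𝒢.mono s.le_succ _ (hA s)))
    (fun s => (hint s).indicator (𝒢.le s _ (hA s))) fun s => ?_
  filter_upwards [condExp_indicator (hint s) (hA s), hcond s] with ω hind hneg
  rw [hind]
  by_cases hω : ω ∈ A s
  · simpa [Set.indicator_of_mem hω] using hneg hω
  · simp [Set.indicator_of_notMem hω]

end

theorem stmt15_general {Ω : Type*} {mΩ : MeasurableSpace Ω} {μ : Measure Ω} [IsProbabilityMeasure μ]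
    {d : ℕ} (𝒢 : Filtration ℕ mΩ) (θ : ℕ → Ω → EuclideanSpace ℝ (Fin d))
    (hadapted : Adapted 𝒢 θ)
    (h : EuclideanSpace ℝ (Fin d) → ℝ) (hh : Measurable h) (hhnonneg : ∀ z, 0 ≤ h z)
    (R : ℝ) (hhbd : ∀ z, h z ≤ R)
    (bdry : ℕ → Set (EuclideanSpace ℝ (Fin d))) (hbdry : ∀ t, MeasurableSet (bdry t))
    (η : ℕ → ℝ) (hη : ∀ t, 0 < η t)
    (a b D β : ℝ) (ha : 0 < a) (hD : 0 ≤ D)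
    (hdrift : ∀ t, ∀ᵐ ω ∂μ,
      (μ[fun ω' => h (θ (t + 1) ω') ^ 2 | 𝒢 t]) ω ≤
        h (θ t ω) ^ 2 -
          2 * η t * (a * h (θ t ω) ^ 2 - b * h (θ t ω)) *
            (if θ t ω ∈ bdry t then 0 else 1) +
          D * η t ^ 2)
    (hstay : ∀ t, ∀ᵐ ω ∂μ, θ t ω ∈ bdry t →
      (μ[fun ω' => h (θ (t + 1) ω') ^ 2 | 𝒢 t]) ω = h (θ t ω) ^ 2)
    (B : Set (EuclideanSpace ℝ (Fin d))) (hB : B = {z | h z ≤ β * b / a}) :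
    Supermartingale
      (fun t ω => ∑ s ∈ Finset.range t,
        if θ s ω ∈ bdry s ∨ θ s ω ∈ B then
          h (θ (s + 1) ω) ^ 2 - h (θ s ω) ^ 2 - η s * b ^ 2 / (2 * a) - D * η s ^ 2
        else 0)
      𝒢 μ := by
  set V : ℕ → Ω → ℝ := fun t ω => h (θ t ω) ^ 2
  set X : ℕ → Ω → ℝ := fun t ω => V t ω + η t * b ^ 2 / (2 * a) + D * η t ^ 2
  have hVm : ∀ t, StronglyMeasurable[𝒢 t] (V t) := fun t =>
    ((hh.comp (hadapted t)).pow_const 2).stronglyMeasurable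
  have hXm : ∀ t, StronglyMeasurable[𝒢 t] (X t) := fun t =>
    (((hVm t).measurable.add_const _).add_const _).stronglyMeasurable
  have hVint : ∀ t, Integrable (V t) μ := fun t =>
    integrable_sq_comp ((hadapted t).mono (𝒢.le t) le_rfl) hh hhnonneg hhbd
  have hXint : ∀ t, Integrable (X t) μ := fun t =>
    ((hVint t).add (integrable_const _)).add (integrable_const _)
  have hA : ∀ s, MeasurableSet[𝒢 s] {ω | θ s ω ∈ bdry s ∨ θ s ω ∈ B} := fun s =>
    hadapted s ((hbdry s).union (hB ▸ hh measurableSet_Iic))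
  have hcond : ∀ t, μ[V (t + 1) | 𝒢 t] ≤ᵐ[μ] X t := fun t => by
    filter_upwards [hdrift t, hstay t] with ω hd hs
    exact le_sq_add_of_drift (hη t).le ha hD hd hs
  have key := supermartingale_sum_range_indicator hA (Z := fun t => V (t + 1) - X t)
    (fun t => (hVm (t + 1)).sub ((hXm t).mono (𝒢.mono t.le_succ)))
    (fun t => (hVint (t + 1)).sub (hXint t))
    fun t => (condExp_sub_nonpos_of_le (𝒢.le t) (hVint (t + 1)) (hXint t) (hXm t)
      (hcond t)).mono fun ω hω _ => hω
  convert key using 4 with t ω s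
  simp only [Set.indicator_apply, Set.mem_ofPred_eq, Pi.sub_apply, V, X]
  congr 1
  ring

/-- Lemma 5.1, second super-martingale. Under the drift inequality
`E[h²(θ_{t+1})|θ_t] ≤ h²(θ_t) − 2η_t[a h²(θ_t) − b h(θ_t)]𝟙(θ_t ∉ ∂Θ_t) + D η_t²`, and
assuming `E[h²(θ_{t+1})|θ_t] = h²(θ_t)` whenever `θ_t ∈ ∂Θ_t`, with
`B = {θ : h θ ≤ β b / a}` and `Z_{t+1} = h²(θ_{t+1}) − h²(θ_t) − η_t b²/(2a) − Dη_t²`,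
the process `∑_{s<t} Z_{s+1} 𝟙(θ_s ∈ ∂Θ_s ∪ B)` is a super-martingale. -/
theorem stmt15 {Ω : Type*} {mΩ : MeasurableSpace Ω} {μ : Measure Ω} [IsProbabilityMeasure μ]
    {d : ℕ} (𝒢 : Filtration ℕ mΩ) (θ : ℕ → Ω → EuclideanSpace ℝ (Fin d))
    (hadapted : Adapted 𝒢 θ) (hmeas : ∀ t, Measurable (θ t))
    (h : EuclideanSpace ℝ (Fin d) → ℝ) (hh : Measurable h) (hhnonneg : ∀ z, 0 ≤ h z)
    (R : ℝ) (hhbd : ∀ z, h z ≤ R)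
    (bdry : ℕ → Set (EuclideanSpace ℝ (Fin d))) (hbdry : ∀ t, MeasurableSet (bdry t))
    (η : ℕ → ℝ) (hη : ∀ t, 0 < η t)
    (a b D β : ℝ) (ha : 0 < a) (hb : 0 ≤ b) (hD : 0 ≤ D) (hβ : 1 < β)
    (hdrift : ∀ t, ∀ᵐ ω ∂μ,
      (μ[fun ω' => h (θ (t + 1) ω') ^ 2 | 𝒢 t]) ω ≤
        h (θ t ω) ^ 2 -
          2 * η t * (a * h (θ t ω) ^ 2 - b * h (θ t ω)) *
            (if θ t ω ∈ bdry t then 0 else 1) +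
          D * η t ^ 2)
    (hstay : ∀ t, ∀ᵐ ω ∂μ, θ t ω ∈ bdry t →
      (μ[fun ω' => h (θ (t + 1) ω') ^ 2 | 𝒢 t]) ω = h (θ t ω) ^ 2)
    (B : Set (EuclideanSpace ℝ (Fin d))) (hB : B = {z | h z ≤ β * b / a}) :
    Supermartingale
      (fun t ω => ∑ s ∈ Finset.range t,
        if θ s ω ∈ bdry s ∨ θ s ω ∈ B then
          h (θ (s + 1) ω) ^ 2 - h (θ s ω) ^ 2 - η s * b ^ 2 / (2 * a) - D * η s ^ 2
        else 0)
      𝒢 μ :=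
  stmt15_general 𝒢 θ hadapted h hh hhnonneg R hhbd bdry hbdry η hη a b D β ha hD hdrift hstay B hB
end
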